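/- In a DAG G with topological order π*, for vertices π*(i), π*(j) with i < j that are non-adjacent, and any path p between them, either every vertex of p other than the endpoints that is a non-collider on p can be blocked by conditioning on predecessors of π*(j), or p contains a collider that is not an ancestor of the conditioning set {π*(1),...,π*(j-1)}\{π*(i)}; hence p does not d-connect π*(i) and π*(j) given that set. -/

import Mathlib

open scoped Classical

/-- A directed acyclic graph on `Fin p`: a finite edge set together with a
topological ordering witnessing acyclicity. -/
structure DAG (p : ℕ) where
  edges : Finset (Fin p × Fin p)
  acyclic : ∃ σ : Equiv.Perm (Fin p), ∀ e ∈ edges, σ.symm e.1 < σ.symm e.2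

namespace DAG

variable {p : ℕ}

def edgeRel (G : DAG p) (a b : Fin p) : Prop := (a, b) ∈ G.edges

/-- adjacency in the skeleton -/
def adj (G : DAG p) (a b : Fin p) : Prop := (a, b) ∈ G.edges ∨ (b, a) ∈ G.edges

/-- the skeleton as a finite set of unordered pairs -/
def skeleton (G : DAG p) : Finset (Sym2 (Fin p)) := G.edges.image (fun e => s(e.1, e.2))

/-- `b` is a collider on a path segment `a - b - c`. -/
def isCollider (G : DAG p) (a b c : Fin p) : Prop := (a, b) ∈ G.edges ∧ (c, b) ∈ G.edges

/-- `b` is in `S` or an ancestor of some element of `S`. -/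
def ancestorOfSet (G : DAG p) (b : Fin p) (S : Finset (Fin p)) : Prop :=
  ∃ s ∈ S, Relation.ReflTransGen G.edgeRel b s

/-- a (simple, undirected) path from `i` to `j` in the skeleton, as a list of vertices -/
def IsTrail (G : DAG p) (i j : Fin p) (l : List (Fin p)) : Prop :=
  l.Chain' G.adj ∧ l.Nodup ∧ 2 ≤ l.length ∧ l.head? = some i ∧ l.getLast? = some j

/-- the path `l` d-connects its endpoints given `S`: every collider on it is in `S` or
has a descendant in `S`, and every non-collider on it is not in `S`. -/
def dConnectsPath (G : DAG p) (S : Finset (Fin p)) (l : List (Fin p)) : Prop :=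
  ∀ a b c : Fin p, [a, b, c] <:+: l →
    (G.isCollider a b c → G.ancestorOfSet b S) ∧ (¬ G.isCollider a b c → b ∉ S)

def dConnected (G : DAG p) (i j : Fin p) (S : Finset (Fin p)) : Prop :=
  ∃ l : List (Fin p), G.IsTrail i j l ∧ G.dConnectsPath S l

def dSep (G : DAG p) (i j : Fin p) (S : Finset (Fin p)) : Prop :=
  i ≠ j ∧ ¬ G.dConnected i j S

end DAG

/-- A (pairwise) conditional independence model: `CI i j S` means
`X_i ⫫ X_j | X_S`. -/
abbrev CIModel (p : ℕ) := Fin p → Fin p → Finset (Fin p) → Prop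

variable {p : ℕ}

/-- `G` is Markov w.r.t. the CI model: every d-separation is a CI statement. -/
def Markov (G : DAG p) (CI : CIModel p) : Prop :=
  ∀ i j S, G.dSep i j S → CI i j S

/-- Markov equivalence: same d-separation statements. -/
def MarkovEquiv (G G' : DAG p) : Prop :=
  ∀ i j S, G.dSep i j S ↔ G'.dSep i j S

/-- `π` is a topological ordering of `G`. -/
def IsTopOrder (G : DAG p) (π : Equiv.Perm (Fin p)) : Prop :=
  ∀ e ∈ G.edges, π.symm e.1 < π.symm e.2

/-- the predecessors `{π 0, …, π (k-1)}` of position `k` in the ordering `π` -/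
def predSet (π : Equiv.Perm (Fin p)) (k : Fin p) : Finset (Fin p) :=
  (Finset.univ.filter (fun m => m < k)).image π

/-- The minimal I-map `G_π`: for `j < k` there is an edge `π j → π k` iff
`π j` and `π k` are conditionally dependent given all other predecessors of `π k`. -/
noncomputable def minimalIMap (CI : CIModel p) (π : Equiv.Perm (Fin p)) : DAG p where
  edges := Finset.univ.filter (fun q : Fin p × Fin p =>
    ∃ j k : Fin p, j < k ∧ q = (π j, π k) ∧ ¬ CI (π j) (π k) ((predSet π k).erase (π j)))
  acyclic := ⟨π, by
    intro e he
    rw [Finset.mem_filter] at he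
    obtain ⟨-, j, k, hjk, rfl, -⟩ := he
    simpa using hjk⟩

/-- the minimal number of edges of a minimal I-map `G_π` over all permutations `π` -/
noncomputable def spScore (CI : CIModel p) : ℕ :=
  ((Finset.univ : Finset (Equiv.Perm (Fin p))).image
    (fun π => (minimalIMap CI π).edges.card)).min' (Finset.univ_nonempty.image _)

/-- adjacency-faithfulness: endpoints of edges of `G` are conditionally dependent
given any conditioning set. -/
def AdjFaithful (G : DAG p) (CI : CIModel p) : Prop :=
  ∀ e ∈ G.edges, ∀ S : Finset (Fin p), e.1 ∉ S → e.2 ∉ S →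
    ¬ CI e.1 e.2 S ∧ ¬ CI e.2 e.1 S

/-- the sparsest Markov representation assumption -/
def SMR (G : DAG p) (CI : CIModel p) : Prop :=
  Markov G CI ∧
    ∀ G' : DAG p, Markov G' CI → ¬ MarkovEquiv G' G → G.edges.card < G'.edges.card

/-- the set of d-separation statements of `G` -/
def DsepSet (G : DAG p) : Set (Fin p × Fin p × Finset (Fin p)) :=
  {t | G.dSep t.1 t.2.1 t.2.2}

/-- P-minimality: no Markov DAG entails strictly more d-separations. -/
def PMinimal (G : DAG p) (CI : CIModel p) : Prop :=
  ∀ G' : DAG p, Markov G' CI → ¬ (DsepSet G ⊂ DsepSet G')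


/-!
Let `b` be the vertex of the path that comes last in `π`. If `b` comes after `π j`, it is an
interior vertex whose two path-neighbours both precede it, so both edges point into `b` and it is
a collider; since ancestors precede their descendants and the conditioning set precedes `π j`,
`b` is not an ancestor of that set. Otherwise `b = π j`, and the neighbour of `π j` on the path
precedes it, hence is a parent of `π j`: a non-collider lying in the conditioning set (it is not
`π i`, which is not adjacent to `π j`).
-/

namespace List

variable {α : Type*}

theorem exists_triple_infix_of_mem {l : List α} {b : α} (hb : b ∈ l)
    (hhead : l.head? ≠ some b) (hlast : l.getLast? ≠ some b) :
    ∃ a c, [a, b, c] <:+: l := by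
  obtain ⟨s, t, rfl⟩ := append_of_mem hb
  obtain rfl | ⟨s, a, rfl⟩ := s.eq_nil_or_concat'
  · simp at hhead
  cases t with
  | nil => simp at hlast
  | cons c t => exact ⟨a, c, s, t, by simp⟩

theorem exists_triple_infix_getLast {R : α → α → Prop} {l : List α} {x y : α}
    (hl : l.IsChain R) (hhead : l.head? = some x) (hlast : l.getLast? = some y)
    (hxy : x ≠ y) (hR : ¬ R x y) :
    ∃ a b, [a, b, y] <:+: l ∧ R b y := by
  obtain ⟨l, rfl⟩ := getLast?_eq_some_iff.mp hlast
  obtain rfl | ⟨l, b, rfl⟩ := l.eq_nil_or_concat'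
  · simp_all
  obtain rfl | ⟨l, a, rfl⟩ := l.eq_nil_or_concat'
  · simp_all
  have hinfix : [a, b, y] <:+: l ++ [a] ++ [b] ++ [y] := ⟨l, [], by simp⟩
  have hchain : [a, b, y].IsChain R := hl.infix hinfix
  exact ⟨a, b, hinfix, isChain_pair.mp (isChain_cons_cons.mp hchain).2⟩

end List

namespace DAG

variable {p : ℕ} {G : DAG p}

theorem adj_comm {a b : Fin p} : G.adj a b ↔ G.adj b a := Or.comm

theorem not_dConnectsPath_of_blocked {S : Finset (Fin p)} {l : List (Fin p)}
    (h : (∃ a b c : Fin p, [a, b, c] <:+: l ∧ ¬ G.isCollider a b c ∧ b ∈ S) ∨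
      (∃ a b c : Fin p, [a, b, c] <:+: l ∧ G.isCollider a b c ∧ ¬ G.ancestorOfSet b S)) :
    ¬ G.dConnectsPath S l := by
  intro hconn
  rcases h with ⟨a, b, c, habc, hnc, hbS⟩ | ⟨a, b, c, habc, hc, hanc⟩
  · exact (hconn a b c habc).2 hnc hbS
  · exact hanc ((hconn a b c habc).1 hc)

end DAG

theorem mem_predSet {p : ℕ} {π : Equiv.Perm (Fin p)} {k b : Fin p} :
    b ∈ predSet π k ↔ π.symm b < k := by
  simp only [predSet, Finset.mem_image, Finset.mem_filter, Finset.mem_univ, true_and]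
  constructor
  · rintro ⟨m, hm, rfl⟩
    simpa using hm
  · exact fun h => ⟨π.symm b, h, by simp⟩

namespace IsTopOrder

variable {p : ℕ} {G : DAG p} {π : Equiv.Perm (Fin p)}

theorem le_of_reflTransGen (htop : IsTopOrder G π) {a b : Fin p}
    (h : Relation.ReflTransGen G.edgeRel a b) : π.symm a ≤ π.symm b := by
  induction h with
  | refl => exact le_rfl
  | tail _ hedge ih => exact ih.trans (htop _ hedge).le

theorem lt_of_ancestorOfSet (htop : IsTopOrder G π) {b k : Fin p} {S : Finset (Fin p)}
    (hS : S ⊆ predSet π k) (hb : G.ancestorOfSet b S) : π.symm b < k := by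
  obtain ⟨s, hs, hbs⟩ := hb
  exact (htop.le_of_reflTransGen hbs).trans_lt (mem_predSet.mp (hS hs))

theorem mem_edges_of_adj_of_le (htop : IsTopOrder G π) {a b : Fin p} (hab : G.adj a b)
    (hle : π.symm a ≤ π.symm b) : (a, b) ∈ G.edges :=
  hab.resolve_right fun hba => (htop _ hba).not_ge hle

theorem isCollider_of_adj_of_le (htop : IsTopOrder G π) {a b c : Fin p} (hab : G.adj a b)
    (hcb : G.adj c b) (ha : π.symm a ≤ π.symm b) (hc : π.symm c ≤ π.symm b) :
    G.isCollider a b c :=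
  ⟨htop.mem_edges_of_adj_of_le hab ha, htop.mem_edges_of_adj_of_le hcb hc⟩

theorem exists_isCollider_not_ancestorOfSet (htop : IsTopOrder G π) {l : List (Fin p)}
    (hl : l.IsChain G.adj) {b k : Fin p} (hb : b ∈ l) (hhead : l.head? ≠ some b)
    (hlast : l.getLast? ≠ some b) (hmax : ∀ v ∈ l, π.symm v ≤ π.symm b)
    {S : Finset (Fin p)} (hS : S ⊆ predSet π k) (hk : k < π.symm b) :
    ∃ a c, [a, b, c] <:+: l ∧ G.isCollider a b c ∧ ¬ G.ancestorOfSet b S := by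
  obtain ⟨a, c, habc⟩ := List.exists_triple_infix_of_mem hb hhead hlast
  have hadj : G.adj a b ∧ G.adj b c := by simpa using hl.infix habc
  refine ⟨a, c, habc, ?_, fun hanc => (htop.lt_of_ancestorOfSet hS hanc).not_gt hk⟩
  exact htop.isCollider_of_adj_of_le hadj.1 (DAG.adj_comm.mp hadj.2)
    (hmax a (habc.subset (by simp))) (hmax c (habc.subset (by simp)))

theorem exists_not_isCollider_mem_predSet (htop : IsTopOrder G π) {l : List (Fin p)}
    (hl : l.IsChain G.adj) {x k : Fin p} (hhead : l.head? = some x)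
    (hlast : l.getLast? = some (π k)) (hx : x ≠ π k) (hnadj : ¬ G.adj x (π k))
    (hmax : ∀ v ∈ l, π.symm v ≤ k) :
    ∃ a b, [a, b, π k] <:+: l ∧ ¬ G.isCollider a b (π k) ∧ b ∈ (predSet π k).erase x := by
  obtain ⟨a, b, habk, hbk⟩ := List.exists_triple_infix_getLast hl hhead hlast hx hnadj
  have hedge : (b, π k) ∈ G.edges :=
    htop.mem_edges_of_adj_of_le hbk (by simpa using hmax b (habk.subset (by simp)))
  have hlt : π.symm b < k := by simpa using htop _ hedge
  refine ⟨a, b, habk, fun hcoll => (htop _ hcoll.2).not_gt (by simpa using hlt), ?_⟩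
  exact Finset.mem_erase.mpr ⟨fun hbx => hnadj (hbx ▸ hbk), mem_predSet.mpr hlt⟩

end IsTopOrder

/-- In a DAG with topological order `π`, for non-adjacent `π i`, `π j` with `i < j`
and any path between them, either some non-collider on the path lies in the
predecessor conditioning set `S = {π 0, …, π (j-1)} \ {π i}`, or the path contains
a collider that is not in `S` nor an ancestor of `S`; hence the path does not
d-connect `π i` and `π j` given `S`. -/
theorem path_blocked_by_predecessors (G : DAG p) (π : Equiv.Perm (Fin p))
    (htop : IsTopOrder G π) (i j : Fin p) (hij : i < j)
    (hnadj : ¬ G.adj (π i) (π j)) (l : List (Fin p))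
    (hl : G.IsTrail (π i) (π j) l) :
    ((∃ a b c : Fin p, [a, b, c] <:+: l ∧ ¬ G.isCollider a b c ∧
        b ∈ (predSet π j).erase (π i)) ∨
      (∃ a b c : Fin p, [a, b, c] <:+: l ∧ G.isCollider a b c ∧
        ¬ G.ancestorOfSet b ((predSet π j).erase (π i)))) ∧
      ¬ G.dConnectsPath ((predSet π j).erase (π i)) l := by
  obtain ⟨hchain, -, -, hhead, hlast⟩ := hl
  have hj : π j ∈ l := List.mem_of_getLast? hlast
  obtain ⟨b, hb, hmax⟩ := l.toFinset.exists_max_image π.symm ⟨π j, List.mem_toFinset.mpr hj⟩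
  simp only [List.mem_toFinset] at hb hmax
  refine (fun hblocked => ⟨hblocked, DAG.not_dConnectsPath_of_blocked hblocked⟩) ?_
  by_cases hbj : b = π j
  · subst hbj
    obtain ⟨a, c, habc, hnc, hc⟩ := htop.exists_not_isCollider_mem_predSet hchain hhead hlast
      (π.injective.ne hij.ne) hnadj (by simpa using hmax)
    exact Or.inl ⟨a, c, π j, habc, hnc, hc⟩
  · have hjb : j < π.symm b := by
      refine lt_of_le_of_ne (by simpa using hmax (π j) hj) ?_
      rintro rfl
      simp at hbj
    have hbi : b ≠ π i := by
      rintro rfl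
      exact (hij.trans hjb).ne (by simp)
    obtain ⟨a, c, habc, hcoll, hanc⟩ := htop.exists_isCollider_not_ancestorOfSet hchain hb
      (by simpa [hhead] using hbi.symm) (by simpa [hlast] using Ne.symm hbj) hmax
      (Finset.erase_subset _ _) hjb
    exact Or.inr ⟨a, b, c, habc, hcoll, hanc⟩
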